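/- arXiv:1107.2631 — 5 statements merged into one kernel-verified Lean document; each statement's English description precedes it below -/
import Mathlib

section
/- Let λ: S → ℕ be a length function on a poset S and λ* its chain length function into finite subsets of ℕ with lexicographic order. Then: (C1) x ≤ y implies λ*(x) ≤ λ*(y); (C2) λ*(x) = λ*(y) implies λ(x) = λ(y). -/
/-- The lexicographic order on finite subsets of ℕ:
`X ≤ Y` iff `min (Y \ X) ≤ min (X \ Y)`, with `min ∅ = ⊤`. -/
def lexLE (X Y : Finset ℕ) : Prop :=
  (Y \ X).min ≤ (X \ Y).min

/-- Strict lexicographic order. -/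
def lexLT (X Y : Finset ℕ) : Prop :=
  lexLE X Y ∧ ¬ lexLE Y X

/-- `X` is a finite chain in the poset `S` with maximal element `x`. -/
def IsChainWithMax {S : Type*} [PartialOrder S] (X : Finset S) (x : S) : Prop :=
  IsChain (· ≤ ·) (X : Set S) ∧ x ∈ X ∧ ∀ y ∈ X, y ≤ x

/-- `mu` is the chain length function of the length function `lam`:
`mu x` is the lexicographic maximum of `lam(X)` over all finite chains `X`
with maximal element `x`. -/
def IsChainLengthFn {S : Type*} [PartialOrder S] (lam : S → ℕ)
    (mu : S → Finset ℕ) : Prop :=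
  ∀ x : S,
    (∃ X : Finset S, IsChainWithMax X x ∧ X.image lam = mu x) ∧
    (∀ X : Finset S, IsChainWithMax X x → lexLE (X.image lam) (mu x))

/-- Shrinking the left set preserves `lexLE`. -/
lemma lexLE_of_subset_left {A A' B : Finset ℕ} (h : A ⊆ A') (hle : lexLE A' B) :
    lexLE A B := by
  unfold lexLE at *
  calc (B \ A).min ≤ (B \ A').min :=
        Finset.min_mono (Finset.sdiff_subset_sdiff (le_refl B) h)
    _ ≤ (A' \ B).min := hle
    _ ≤ (A \ B).min :=
        Finset.min_mono (Finset.sdiff_subset_sdiff h (le_refl B))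

/-- (C1) and (C2): the chain length function `λ*` refines the length
function `λ`. -/
theorem chainLengthFn_C1_C2 {S : Type*} [PartialOrder S] (lam : S → ℕ)
    (hpos : ∀ x : S, 0 < lam x)
    (hmono : ∀ x y : S, x < y → lam x < lam y)
    (mu : S → Finset ℕ) (hmu : IsChainLengthFn lam mu) :
    (∀ x y : S, x ≤ y → lexLE (mu x) (mu y)) ∧
    (∀ x y : S, mu x = mu y → lam x = lam y) := by
  -- lam is monotone
  have hmono' : ∀ x y : S, x ≤ y → lam x ≤ lam y := by
    intro x y hxy
    rcases eq_or_lt_of_le hxy with h | h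
    · exact le_of_eq (congrArg lam h)
    · exact le_of_lt (hmono x y h)
  -- lam x is the maximum element of mu x
  have hmem : ∀ x : S, lam x ∈ mu x := by
    intro x
    obtain ⟨X, ⟨_, hxX, _⟩, himg⟩ := (hmu x).1
    rw [← himg]
    exact Finset.mem_image_of_mem lam hxX
  have hmax : ∀ x : S, ∀ a ∈ mu x, a ≤ lam x := by
    intro x a ha
    obtain ⟨X, ⟨_, _, hXle⟩, himg⟩ := (hmu x).1
    rw [← himg] at ha
    obtain ⟨z, hz, rfl⟩ := Finset.mem_image.mp ha
    exact hmono' z x (hXle z hz)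
  constructor
  · -- (C1)
    intro x y hxy
    classical
    obtain ⟨X, hX, himg⟩ := (hmu x).1
    obtain ⟨hchain, hxX, hXle⟩ := hX
    have hX' : IsChainWithMax (insert y X) y := by
      refine ⟨?_, Finset.mem_insert_self y X, ?_⟩
      · rw [Finset.coe_insert]
        exact hchain.insert (fun b hb _ => Or.inr (le_trans (hXle b hb) hxy))
      · intro z hz
        rcases Finset.mem_insert.mp hz with rfl | hz
        · exact le_refl z
        · exact le_trans (hXle z hz) hxy
    have h1 : lexLE ((insert y X).image lam) (mu y) := (hmu y).2 _ hX'
    have h2 : mu x ⊆ (insert y X).image lam := by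
      rw [← himg]
      exact Finset.image_subset_image (Finset.subset_insert y X)
    exact lexLE_of_subset_left h2 h1
  · -- (C2)
    intro x y h
    have hx : (mu x).Nonempty := ⟨lam x, hmem x⟩
    have ex : (mu x).max' hx = lam x :=
      le_antisymm (Finset.max'_le _ _ _ (hmax x)) (Finset.le_max' _ _ (hmem x))
    have ey : (mu y).max' ⟨lam y, hmem y⟩ = lam y :=
      le_antisymm (Finset.max'_le _ _ _ (hmax y)) (Finset.le_max' _ _ (hmem y))
    rw [← ex, ← ey]
    congr 1
end

section
/- Let λ: S → ℕ be a length function on a poset S and λ* its chain length function. If λ*(x') < λ*(y) for all x' < x and λ(x) ≥ λ(y), then λ*(x) ≤ λ*(y). -/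
/-- From a lexLE bound and an element of `X \ Y`, realize the min of `Y \ X`. -/
lemma min_realize {X Y : Finset ℕ} {u : ℕ} (h : (Y \ X).min ≤ (X \ Y).min)
    (hu : u ∈ X \ Y) : ∃ v ∈ Y \ X, v ≤ u ∧ (Y \ X).min = ↑v := by
  have h' : (Y \ X).min ≤ ↑u := le_trans h (Finset.min_le hu)
  rcases (Y \ X).eq_empty_or_nonempty with he | he
  · rw [he] at h'; simp at h'
  · obtain ⟨v, hv⟩ := Finset.min_of_nonempty he
    rw [hv] at h'
    exact ⟨v, Finset.mem_of_min hv, WithTop.coe_le_coe.mp h', hv⟩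

lemma lexLE_trans {A B C : Finset ℕ} (hAB : lexLE A B) (hBC : lexLE B C) :
    lexLE A C := by
  unfold lexLE at *
  rcases (A \ C).eq_empty_or_nonempty with hAC | hAC
  · simp [hAC]
  · obtain ⟨a, ha⟩ := Finset.min_of_nonempty hAC
    have haA : a ∈ A ∧ a ∉ C := Finset.mem_sdiff.mp (Finset.mem_of_min ha)
    rw [ha]
    suffices h : ∃ c ∈ C \ A, c ≤ a by
      obtain ⟨c, hc, hca⟩ := h
      exact le_trans (Finset.min_le hc) (WithTop.coe_le_coe.mpr hca)
    by_cases haB : a ∈ B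
    · obtain ⟨c, hc, hca, hcmin⟩ :=
        min_realize hBC (Finset.mem_sdiff.mpr ⟨haB, haA.2⟩)
      have hcC : c ∈ C ∧ c ∉ B := Finset.mem_sdiff.mp hc
      by_cases hcA : c ∈ A
      · obtain ⟨b, hb, hbc, hbmin⟩ :=
          min_realize hAB (Finset.mem_sdiff.mpr ⟨hcA, hcC.2⟩)
        have hbB : b ∈ B ∧ b ∉ A := Finset.mem_sdiff.mp hb
        by_cases hbC : b ∈ C
        · exact ⟨b, Finset.mem_sdiff.mpr ⟨hbC, hbB.2⟩, le_trans hbc hca⟩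
        · have h3 : (C \ B).min ≤ ↑b :=
            le_trans hBC (Finset.min_le (Finset.mem_sdiff.mpr ⟨hbB.1, hbC⟩))
          rw [hcmin] at h3
          have h4 : c ≤ b := WithTop.coe_le_coe.mp h3
          have h5 : b = c := le_antisymm hbc h4
          exact absurd (h5 ▸ hcA) hbB.2
      · exact ⟨c, Finset.mem_sdiff.mpr ⟨hcC.1, hcA⟩, hca⟩
    · obtain ⟨b, hb, hba, hbmin⟩ :=
        min_realize hAB (Finset.mem_sdiff.mpr ⟨haA.1, haB⟩)
      have hbB : b ∈ B ∧ b ∉ A := Finset.mem_sdiff.mp hb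
      by_cases hbC : b ∈ C
      · exact ⟨b, Finset.mem_sdiff.mpr ⟨hbC, hbB.2⟩, hba⟩
      · obtain ⟨c, hc, hcb, hcmin⟩ :=
          min_realize hBC (Finset.mem_sdiff.mpr ⟨hbB.1, hbC⟩)
        have hcC : c ∈ C ∧ c ∉ B := Finset.mem_sdiff.mp hc
        by_cases hcA : c ∈ A
        · have h3 : (B \ A).min ≤ ↑c :=
            le_trans hAB (Finset.min_le (Finset.mem_sdiff.mpr ⟨hcA, hcC.2⟩))
          rw [hbmin] at h3
          have h4 : b ≤ c := WithTop.coe_le_coe.mp h3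
          have h5 : b = c := le_antisymm h4 hcb
          exact absurd (h5 ▸ hcA) hbB.2
        · exact ⟨c, Finset.mem_sdiff.mpr ⟨hcC.1, hcA⟩, le_trans hcb hba⟩

/-- Key combination lemma: if `A < B` lexicographically, every element of `B`
is `≤ a`, and every element of `A` is `< a`, then `insert a A ≤ B`. -/
lemma lexLE_insert {A B : Finset ℕ} {a : ℕ} (hlt : lexLT A B)
    (hB : ∀ b ∈ B, b ≤ a) (hA : ∀ c ∈ A, c < a) : lexLE (insert a A) B := by
  obtain ⟨hle, hnle⟩ := hlt
  unfold lexLE at *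
  have hstrict : (B \ A).min < (A \ B).min := lt_of_not_ge hnle
  have hBA : (B \ A).Nonempty := by
    rcases (B \ A).eq_empty_or_nonempty with he | he
    · rw [he] at hstrict; exact absurd hstrict (by simp)
    · exact he
  obtain ⟨m, hm⟩ := Finset.min_of_nonempty hBA
  have hmB : m ∈ B ∧ m ∉ A := Finset.mem_sdiff.mp (Finset.mem_of_min hm)
  by_cases haB : a ∈ B
  · rw [Finset.insert_sdiff_of_mem _ haB]
    rcases (A \ B).eq_empty_or_nonempty with hAB | hAB
    · simp [hAB]
    · obtain ⟨c, hc⟩ := Finset.min_of_nonempty hAB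
      have hcA : c ∈ A ∧ c ∉ B := Finset.mem_sdiff.mp (Finset.mem_of_min hc)
      have hmc : m < c := by
        rw [hm, hc] at hstrict; exact_mod_cast hstrict
      have hma : m ≠ a := by
        have := hA c hcA.1; omega
      have hmem : m ∈ B \ insert a A := by
        rw [Finset.sdiff_insert]
        exact Finset.mem_erase.mpr ⟨hma, Finset.mem_of_min hm⟩
      calc (B \ insert a A).min ≤ (m : WithTop ℕ) := Finset.min_le hmem
        _ ≤ (A \ B).min := by rw [hc]; exact WithTop.coe_le_coe.mpr hmc.le
  · have hBi : B \ insert a A = B \ A := by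
      rw [Finset.sdiff_insert, Finset.erase_eq_of_notMem]
      simp [haB]
    rw [hm] at hstrict
    rw [hBi, Finset.insert_sdiff_of_notMem _ haB, Finset.min_insert, hm]
    exact le_min (WithTop.coe_le_coe.mpr (hB m hmB.1)) hstrict.le

/-- (C3): if `λ*(x') < λ*(y)` for all `x' < x` and `λ(x) ≥ λ(y)`, then
`λ*(x) ≤ λ*(y)`. -/
theorem chainLengthFn_C3 {S : Type*} [PartialOrder S] (lam : S → ℕ)
    (hpos : ∀ x : S, 0 < lam x)
    (hmono : ∀ x y : S, x < y → lam x < lam y)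
    (mu : S → Finset ℕ) (hmu : IsChainLengthFn lam mu) (x y : S)
    (h1 : ∀ x' : S, x' < x → lexLT (mu x') (mu y))
    (h2 : lam y ≤ lam x) :
    lexLE (mu x) (mu y) := by
  classical
  have hmono' : ∀ z w : S, z ≤ w → lam z ≤ lam w := by
    intro z w h
    rcases eq_or_lt_of_le h with rfl | h
    · exact le_rfl
    · exact (hmono z w h).le
  -- properties of mu y
  obtain ⟨Y, ⟨hYchain, hyY, hYmax⟩, hY⟩ := (hmu y).1
  have hmuy_le : ∀ b ∈ mu y, b ≤ lam y := by
    intro b hb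
    rw [← hY] at hb
    obtain ⟨z, hz, rfl⟩ := Finset.mem_image.mp hb
    exact hmono' z y (hYmax z hz)
  have hlamy_mem : lam y ∈ mu y := by
    rw [← hY]; exact Finset.mem_image_of_mem lam hyY
  -- optimal chain for x
  obtain ⟨X, ⟨hXchain, hxX, hXmax⟩, hX⟩ := (hmu x).1
  rcases (X.erase x).eq_empty_or_nonempty with hX' | hX'
  · -- X = {x}, so mu x = {lam x}
    have hXx : X = {x} := by
      have := Finset.insert_erase hxX
      rw [hX'] at this
      simp at this
      exact this.symm
    have hmux : mu x = {lam x} := by rw [← hX, hXx, Finset.image_singleton]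
    rw [hmux]
    unfold lexLE
    by_cases hax : lam x ∈ mu y
    · have : ({lam x} : Finset ℕ) \ mu y = ∅ := by
        simp [Finset.sdiff_eq_empty_iff_subset, Finset.singleton_subset_iff, hax]
      rw [this]
      simp
    · have hmem : lam y ∈ mu y \ {lam x} := by
        refine Finset.mem_sdiff.mpr ⟨hlamy_mem, ?_⟩
        simp only [Finset.mem_singleton]
        intro h; rw [← h] at hax; exact hax hlamy_mem
      calc (mu y \ {lam x}).min ≤ (lam y : WithTop ℕ) := Finset.min_le hmem
        _ ≤ ((lam x : ℕ) : WithTop ℕ) := by exact_mod_cast h2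
        _ ≤ ({lam x} \ mu y).min := by
            rw [Finset.sdiff_eq_self_of_disjoint (by simpa using hax)]
            simp
  · -- X has an element besides x; find the max x' of X.erase x
    obtain ⟨x', hx'mem, hx'max⟩ := Finset.exists_max_image (X.erase x) lam hX'
    have hx'X : x' ∈ X := Finset.mem_of_mem_erase hx'mem
    have hmax' : ∀ z ∈ X.erase x, z ≤ x' := by
      intro z hz
      have hzX : z ∈ X := Finset.mem_of_mem_erase hz
      rcases eq_or_ne z x' with rfl | hne
      · exact le_rfl
      · rcases hXchain (Finset.mem_coe.mpr hzX) (Finset.mem_coe.mpr hx'X) hne with h | h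
        · exact h
        · rcases eq_or_lt_of_le h with h' | h'
          · exact h'.ge
          · exact absurd (hmono x' z h') (by have := hx'max z hz; omega)
    have hx'x : x' < x :=
      lt_of_le_of_ne (hXmax x' hx'X) (Finset.ne_of_mem_erase hx'mem)
    have hchain' : IsChainWithMax (X.erase x) x' := by
      refine ⟨?_, hx'mem, hmax'⟩
      exact hXchain.mono (by simp [Finset.coe_subset, Finset.erase_subset])
    have hA : lexLE ((X.erase x).image lam) (mu x') := (hmu x').2 _ hchain'
    have hlt : lexLT ((X.erase x).image lam) (mu y) := by
      obtain ⟨h3, h4⟩ := h1 x' hx'x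
      exact ⟨lexLE_trans hA h3, fun h => h4 (lexLE_trans h hA)⟩
    have hmux : mu x = insert (lam x) ((X.erase x).image lam) := by
      rw [← hX]
      conv_lhs => rw [← Finset.insert_erase hxX]
      rw [Finset.image_insert]
    rw [hmux]
    refine lexLE_insert hlt (fun b hb => le_trans (hmuy_le b hb) h2) ?_
    intro c hc
    obtain ⟨z, hz, rfl⟩ := Finset.mem_image.mp hc
    exact hmono z x (lt_of_le_of_ne (hXmax z (Finset.mem_of_mem_erase hz))
      (Finset.ne_of_mem_erase hz))
end

section
/- Let λ: S → ℕ be a length function on a poset S. Suppose μ: S → P and μ': S → P' are maps into posets each satisfying: (P1) x ≤ y implies μ(x) ≤ μ(y); (P2) μ(x) = μ(y) implies λ(x) = λ(y); (P3) if μ(x') < μ(y) for all x' < x and λ(x) ≥ λ(y), then μ(x) ≤ μ(y). Then for all x, y ∈ S: μ(x) ≤ μ(y) if and only if μ'(x) ≤ μ'(y). In particular, any such μ is totally preordered (μ(x) ≤ μ(y) or μ(y) ≤ μ(x) for all x, y), and the induced preorder coincides with the one given by the chain length function λ*. -/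
/-!
Two measures satisfying (P1)–(P3) induce the same preorder, by induction on `λ x + λ y`.
When `λ y ≤ λ x`, axiom (P3) and strict monotonicity of the measures reduce `μ x ≤ μ y`
to the comparisons `μ x' < μ y` for `x' < x`, which agree for both measures by induction.
When `λ x < λ y`, axiom (P2) turns `μ x ≤ μ y` into `¬ μ y ≤ μ x`, using totality, which
follows by the same induction. The chain length function is such a measure: if `X` is a
chain realising `λ* x`, then `λ (X \ {x}) ≤ λ* x' < λ* y` for its second largest element
`x'`, and adding `λ x`, which exceeds all of `λ (X \ {x})` and is at least every element
of `λ* y`, preserves `≤`.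
-/

open Finset Finset.Colex OrderDual

/-- The axioms (P1), (P2), (P3) of a Gabriel–Roiter measure for the length function `lam`. -/
structure IsGRMeasure_s8 {S P : Type*} [PartialOrder S] [PartialOrder P]
    (lam : S → ℕ) (mu : S → P) : Prop where
  monotone : Monotone mu
  lam_eq_of_eq : ∀ ⦃x y⦄, mu x = mu y → lam x = lam y
  le_of_forall_lt : ∀ ⦃x y⦄, (∀ x' < x, mu x' < mu y) → lam y ≤ lam x → mu x ≤ mu y

namespace IsGRMeasure_s8

variable {S P Q : Type*} [PartialOrder S] [PartialOrder P] [PartialOrder Q] {lam : S → ℕ}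
  {mu : S → P} {nu : S → Q}

lemma strictMono (hlam : StrictMono lam) (hmu : IsGRMeasure_s8 lam mu) : StrictMono mu :=
  fun _ _ h => (hmu.monotone h.le).lt_of_ne fun he => (hlam h).ne (hmu.lam_eq_of_eq he)

lemma le_or_le_of_lam_le (hmu : IsGRMeasure_s8 lam mu) {x y : S} (hyx : lam y ≤ lam x)
    (ih : ∀ x' < x, mu x' ≤ mu y ∨ mu y ≤ mu x') : mu x ≤ mu y ∨ mu y ≤ mu x := by
  by_cases hall : ∀ x' < x, mu x' < mu y
  · exact Or.inl (hmu.le_of_forall_lt hall hyx)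
  push Not at hall
  obtain ⟨x', hx', hnlt⟩ := hall
  have hyx' : mu y ≤ mu x' := (ih x' hx').elim (fun h => (h.lt_or_eq.resolve_left hnlt).ge) id
  exact Or.inr (hyx'.trans (hmu.monotone hx'.le))

lemma total (hlam : StrictMono lam) (hmu : IsGRMeasure_s8 lam mu) (x y : S) :
    mu x ≤ mu y ∨ mu y ≤ mu x := by
  rcases le_total (lam y) (lam x) with hyx | hxy
  · exact hmu.le_or_le_of_lam_le hyx fun x' _ => total hlam hmu x' y
  · exact (hmu.le_or_le_of_lam_le hxy fun y' _ => total hlam hmu y' x).symm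
termination_by lam x + lam y
decreasing_by all_goals have := hlam ‹_›; omega

lemma le_iff_not_le_of_lam_lt (hlam : StrictMono lam) (hmu : IsGRMeasure_s8 lam mu) {x y : S}
    (hxy : lam x < lam y) : mu x ≤ mu y ↔ ¬ mu y ≤ mu x :=
  ⟨fun h h' => hxy.ne (hmu.lam_eq_of_eq (le_antisymm h h')),
    fun h => (hmu.total hlam x y).resolve_right h⟩

lemma le_of_le_of_lam_le (hlam : StrictMono lam) (hmu : IsGRMeasure_s8 lam mu)
    (hnu : IsGRMeasure_s8 lam nu) {x y : S} (hyx : lam y ≤ lam x)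
    (ih : ∀ x' < x, mu x' < mu y → nu x' < nu y) (hle : mu x ≤ mu y) : nu x ≤ nu y :=
  hnu.le_of_forall_lt (fun x' hx' => ih x' hx' ((hmu.strictMono hlam hx').trans_le hle)) hyx

lemma le_iff_le (hlam : StrictMono lam) (hmu : IsGRMeasure_s8 lam mu) (hnu : IsGRMeasure_s8 lam nu)
    (x y : S) : mu x ≤ mu y ↔ nu x ≤ nu y := by
  have lt_iff_lt (x' y' : S) (h : lam x' + lam y' < lam x + lam y) :
      mu x' < mu y' ↔ nu x' < nu y' := by
    rw [lt_iff_le_not_ge, lt_iff_le_not_ge, le_iff_le hlam hmu hnu x' y',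
      le_iff_le hlam hmu hnu y' x']
  have le_iff_of_lam_le {a b : S} (hba : lam b ≤ lam a) (hab : lam a + lam b = lam x + lam y) :
      mu a ≤ mu b ↔ nu a ≤ nu b := by
    have ih (a' : S) (ha' : a' < a) : mu a' < mu b ↔ nu a' < nu b :=
      lt_iff_lt a' b (by have := hlam ha'; omega)
    exact ⟨hmu.le_of_le_of_lam_le hlam hnu hba fun a' ha' => (ih a' ha').mp,
      hnu.le_of_le_of_lam_le hlam hmu hba fun a' ha' => (ih a' ha').mpr⟩
  rcases le_or_gt (lam y) (lam x) with hyx | hxy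
  · exact le_iff_of_lam_le hyx rfl
  · rw [hmu.le_iff_not_le_of_lam_lt hlam hxy, hnu.le_iff_not_le_of_lam_lt hlam hxy,
      le_iff_of_lam_le hxy.le (add_comm _ _)]
termination_by lam x + lam y

end IsGRMeasure_s8

lemma lexLE_iff_forall_exists {X Y : Finset ℕ} :
    lexLE X Y ↔ ∀ a ∈ X \ Y, ∃ b ∈ Y \ X, b ≤ a := by
  rw [lexLE, Finset.le_min_iff]
  refine forall₂_congr fun a _ => ?_
  rw [min_eq_inf_withTop, Finset.inf_le_iff (WithTop.coe_lt_top a)]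
  simp only [WithTop.coe_le_coe]

/-- `lexLE` is the colexicographic order for the reversed order on `ℕ`: both compare the
smallest element of the symmetric difference. -/
def lexKey (X : Finset ℕ) : Colex (Finset ℕᵒᵈ) :=
  toColex (X.map toDual.toEmbedding)

lemma lexLE_iff_lexKey_le {X Y : Finset ℕ} : lexLE X Y ↔ lexKey X ≤ lexKey Y := by
  simp only [lexLE_iff_forall_exists, lexKey, toColex_le_toColex, mem_map_equiv, mem_sdiff,
    OrderDual.forall, OrderDual.exists, toDual_le_toDual, Equiv.symm_apply_apply, and_imp,
    and_assoc]

lemma lexKey_injective : Function.Injective lexKey := fun _ _ h =>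
  map_injective _ (toColex.injective h)

lemma lexKey_mono : Monotone lexKey := fun _ _ h =>
  toColex_le_toColex_of_subset (map_subset_map.mpr h)

lemma lexKey_strictMono : StrictMono lexKey := fun _ _ h =>
  toColex_lt_toColex_of_ssubset (map_ssubset_map.mpr h)

lemma Finset.Colex.toColex_insert_le_of_lt {α : Type*} [LinearOrder α] {a : α}
    {s t : Finset α} (hst : toColex s < toColex t) (hs : ∀ b ∈ s, a < b)
    (ht : ∀ b ∈ t, a ≤ b) :
    toColex (insert a s) ≤ toColex t := by
  obtain ⟨c, hct, hcs, hc⟩ := toColex_lt_toColex_iff_exists_forall_lt.mp hst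
  rcases eq_or_ne c a with rfl | hca
  · refine toColex_le_toColex_of_subset (insert_subset hct fun b hb => ?_)
    by_contra hbt
    exact (hc b hb hbt).not_gt (hs b hb)
  · refine (toColex_lt_toColex_iff_exists_forall_lt.mpr ⟨c, hct, ?_, ?_⟩).le
    · simp [hca, hcs]
    · simp only [mem_insert, forall_eq_or_imp]
      exact ⟨fun _ => (ht c hct).lt_of_ne hca.symm, hc⟩

lemma lexKey_insert_le_of_lt {m : ℕ} {C B : Finset ℕ} (hCB : lexKey C < lexKey B)
    (hC : ∀ c ∈ C, c < m) (hB : ∀ b ∈ B, b ≤ m) : lexKey (insert m C) ≤ lexKey B := by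
  rw [lexKey, map_insert]
  exact toColex_insert_le_of_lt hCB (by simpa using hC) (by simpa using hB)

namespace IsChainWithMax

variable {S : Type*} [PartialOrder S] [DecidableEq S] {X : Finset S} {x : S}

lemma insert (hX : IsChainWithMax X x) {y : S} (hxy : x ≤ y) : IsChainWithMax (insert y X) y := by
  have hle : ∀ z ∈ X, z ≤ y := fun z hz => (hX.2.2 z hz).trans hxy
  refine ⟨?_, mem_insert_self y X, ?_⟩
  · rw [coe_insert]
    exact hX.1.insert fun z hz _ => Or.inr (hle z hz)
  · simpa only [mem_insert, forall_eq_or_imp] using ⟨le_rfl, hle⟩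

lemma lt_of_mem_erase (hX : IsChainWithMax X x) {z : S} (hz : z ∈ X.erase x) : z < x :=
  (hX.2.2 z (mem_of_mem_erase hz)).lt_of_ne (ne_of_mem_erase hz)

lemma erase (hX : IsChainWithMax X x) (hne : (X.erase x).Nonempty) :
    ∃ x' < x, IsChainWithMax (X.erase x) x' := by
  obtain ⟨x', hx'⟩ := (X.erase x).exists_maximal hne
  have hchain : IsChain (· ≤ ·) (X.erase x : Set S) :=
    hX.1.mono (coe_subset.mpr (erase_subset x X))
  refine ⟨x', hX.lt_of_mem_erase hx'.prop, hchain, hx'.prop, fun z hz => ?_⟩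
  rcases eq_or_ne z x' with rfl | hzx'
  · exact le_rfl
  · exact (hchain hz hx'.prop hzx').elim id (hx'.le_of_ge hz)

end IsChainWithMax

namespace IsChainLengthFn

variable {S : Type*} [PartialOrder S] {lam : S → ℕ} {mustar : S → Finset ℕ}

lemma lam_mem (hmustar : IsChainLengthFn lam mustar) (x : S) : lam x ∈ mustar x := by
  obtain ⟨X, hX, him⟩ := (hmustar x).1
  exact him ▸ mem_image_of_mem lam hX.2.1

lemma le_lam_of_mem (hlam : StrictMono lam) (hmustar : IsChainLengthFn lam mustar) {x : S}
    {a : ℕ} (ha : a ∈ mustar x) : a ≤ lam x := by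
  obtain ⟨X, hX, him⟩ := (hmustar x).1
  obtain ⟨z, hz, rfl⟩ := mem_image.mp (him ▸ ha)
  exact hlam.monotone (hX.2.2 z hz)

lemma isGRMeasure (hlam : StrictMono lam) (hmustar : IsChainLengthFn lam mustar) :
    IsGRMeasure_s8 lam (fun x => lexKey (mustar x)) where
  monotone x y hxy := by
    classical
    obtain ⟨X, hX, him⟩ := (hmustar x).1
    have hle := lexLE_iff_lexKey_le.mp ((hmustar y).2 _ (hX.insert hxy))
    rw [image_insert, him] at hle
    exact (lexKey_mono (subset_insert _ _)).trans hle
  lam_eq_of_eq x y h := by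
    have h := lexKey_injective h
    exact le_antisymm (hmustar.le_lam_of_mem hlam (h ▸ hmustar.lam_mem x))
      (hmustar.le_lam_of_mem hlam (h ▸ hmustar.lam_mem y))
  le_of_forall_lt x y hall hyx := by
    classical
    obtain ⟨X, hX, him⟩ := (hmustar x).1
    have hsplit : mustar x = insert (lam x) ((X.erase x).image lam) := by
      rw [← him, ← image_insert, insert_erase hX.2.1]
    have hlt : lexKey ((X.erase x).image lam) < lexKey (mustar y) := by
      rcases (X.erase x).eq_empty_or_nonempty with hempty | hne
      · rw [hempty, image_empty]
        exact lexKey_strictMono (empty_ssubset.mpr ⟨_, hmustar.lam_mem y⟩)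
      · obtain ⟨x', hx', hX'⟩ := hX.erase hne
        exact (lexLE_iff_lexKey_le.mp ((hmustar x').2 _ hX')).trans_lt (hall x' hx')
    rw [hsplit]
    refine lexKey_insert_le_of_lt hlt ?_ fun b hb => (hmustar.le_lam_of_mem hlam hb).trans hyx
    simp only [mem_image, forall_exists_index, and_imp, forall_apply_eq_imp_iff₂]
    exact fun z hz => hlam (hX.lt_of_mem_erase hz)

end IsChainLengthFn

theorem grMeasure_axiomatic_general {S : Type*} [PartialOrder S]
    {P : Type*} [PartialOrder P] {P' : Type*} [PartialOrder P']
    (lam : S → ℕ)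
    (hmono : ∀ x y : S, x < y → lam x < lam y)
    (mustar : S → Finset ℕ) (hmustar : IsChainLengthFn lam mustar)
    (mu : S → P) (mu' : S → P')
    (hP1 : ∀ x y : S, x ≤ y → mu x ≤ mu y)
    (hP2 : ∀ x y : S, mu x = mu y → lam x = lam y)
    (hP3 : ∀ x y : S, (∀ x' : S, x' < x → mu x' < mu y) → lam y ≤ lam x →
      mu x ≤ mu y)
    (hP1' : ∀ x y : S, x ≤ y → mu' x ≤ mu' y)
    (hP2' : ∀ x y : S, mu' x = mu' y → lam x = lam y)
    (hP3' : ∀ x y : S, (∀ x' : S, x' < x → mu' x' < mu' y) → lam y ≤ lam x →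
      mu' x ≤ mu' y) :
    (∀ x y : S, mu x ≤ mu y ∨ mu y ≤ mu x) ∧
    (∀ x y : S, mu x ≤ mu y ↔ mu' x ≤ mu' y) ∧
    (∀ x y : S, mu x ≤ mu y ↔ lexLE (mustar x) (mustar y)) := by
  have hlam : StrictMono lam := fun x y => hmono x y
  have hmu : IsGRMeasure_s8 lam mu := ⟨fun x y => hP1 x y, fun x y => hP2 x y, fun x y => hP3 x y⟩
  have hmu' : IsGRMeasure_s8 lam mu' :=
    ⟨fun x y => hP1' x y, fun x y => hP2' x y, fun x y => hP3' x y⟩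
  have hstar := hmustar.isGRMeasure hlam
  refine ⟨hmu.total hlam, hmu.le_iff_le hlam hmu', fun x y => ?_⟩
  rw [lexLE_iff_lexKey_le]
  exact hmu.le_iff_le hlam hstar x y

/-- Axiomatic characterization of the Gabriel-Roiter measure: any two maps
`μ : S → P`, `μ' : S → P'` into partially ordered sets satisfying (P1)–(P3)
induce the same preorder on `S`; this preorder is total and coincides with
the one given by the chain length function `λ*`. -/
theorem grMeasure_axiomatic {S : Type*} [PartialOrder S]
    {P : Type*} [PartialOrder P] {P' : Type*} [PartialOrder P']
    (lam : S → ℕ)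
    (hpos : ∀ x : S, 0 < lam x)
    (hmono : ∀ x y : S, x < y → lam x < lam y)
    (hfin : ∀ (x : S) (n : ℕ), Set.Finite {x' : S | x' < x ∧ lam x' = n})
    (mustar : S → Finset ℕ) (hmustar : IsChainLengthFn lam mustar)
    (mu : S → P) (mu' : S → P')
    (hP1 : ∀ x y : S, x ≤ y → mu x ≤ mu y)
    (hP2 : ∀ x y : S, mu x = mu y → lam x = lam y)
    (hP3 : ∀ x y : S, (∀ x' : S, x' < x → mu x' < mu y) → lam y ≤ lam x →
      mu x ≤ mu y)
    (hP1' : ∀ x y : S, x ≤ y → mu' x ≤ mu' y)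
    (hP2' : ∀ x y : S, mu' x = mu' y → lam x = lam y)
    (hP3' : ∀ x y : S, (∀ x' : S, x' < x → mu' x' < mu' y) → lam y ≤ lam x →
      mu' x ≤ mu' y) :
    (∀ x y : S, mu x ≤ mu y ∨ mu y ≤ mu x) ∧
    (∀ x y : S, mu x ≤ mu y ↔ mu' x ≤ mu' y) ∧
    (∀ x y : S, mu x ≤ mu y ↔ lexLE (mustar x) (mustar y)) :=
  grMeasure_axiomatic_general lam hmono mustar hmustar mu mu' hP1 hP2 hP3 hP1' hP2' hP3'
end

section
/- Let A be an abelian length category and X an indecomposable object of length 3. Then ℓ*(X) = {1,2,3} if the socle of X is simple, and ℓ*(X) = {1,3} if the socle has length at least 2. -/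
open CategoryTheory CategoryTheory.Limits

variable {C : Type*} [Category C] [Abelian C]

/-- `n` is the composition length of the object `X`: there is a maximal
strictly increasing chain of subobjects of `X` from `⊥` to `⊤` with `n`
steps, and every strictly increasing chain of subobjects has at most
`n` steps. -/
def ObjLength (X : C) (n : ℕ) : Prop :=
  (∃ f : Fin (n + 1) → Subobject X, StrictMono f ∧ f 0 = ⊥ ∧ f (Fin.last n) = ⊤) ∧
  ∀ (m : ℕ) (f : Fin (m + 1) → Subobject X), StrictMono f → m ≤ n

/-- `A` is the set of lengths of a finite chain of indecomposable subobjects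
of `X` ending in `X` itself. -/
def IsGRChainVal (len : C → ℕ) (X : C) (A : Finset ℕ) : Prop :=
  ∃ s : Finset (Subobject X),
    IsChain (· ≤ ·) (s : Set (Subobject X)) ∧
    (⊤ : Subobject X) ∈ s ∧
    (∀ t ∈ s, Indecomposable ((t : Subobject X) : C)) ∧
    s.image (fun t : Subobject X => len ((t : Subobject X) : C)) = A

/-- `mu` is the Gabriel-Roiter measure associated to the length function
`len`: for each indecomposable `X`, `mu X` is the lexicographic maximum of
the sets of lengths along chains of indecomposable subobjects of `X`. -/
def IsGRMeasure (len : C → ℕ) (mu : C → Finset ℕ) : Prop :=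
  ∀ X : C, Indecomposable X →
    IsGRChainVal len X (mu X) ∧
    ∀ A : Finset ℕ, IsGRChainVal len X A → lexLE A (mu X)

/-- `X` is a Gabriel-Roiter predecessor of `Y`: both are indecomposable,
`X` is a proper subobject of `Y`, and `mu X` attains the maximum of the
Gabriel-Roiter measures of the proper indecomposable subobjects of `Y`. -/
def IsGRPred (mu : C → Finset ℕ) (X Y : C) : Prop :=
  Indecomposable X ∧ Indecomposable Y ∧
  (∃ f : X ⟶ Y, Mono f ∧ ¬ IsIso f) ∧
  ∀ t : Subobject Y, t ≠ ⊤ → Indecomposable ((t : Subobject Y) : C) →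
    lexLE (mu ((t : Subobject Y) : C)) (mu X)

section Aux

open CategoryTheory.Subobject

/-! ### Lexicographic order lemmas -/

theorem lexLE_of_subset {A B : Finset ℕ} (h : A ⊆ B) : lexLE A B := by
  unfold lexLE
  rw [Finset.sdiff_eq_empty_iff_subset.mpr h, Finset.min_empty]
  exact le_top

theorem lexLE_antisymm {A B : Finset ℕ} (h1 : lexLE A B) (h2 : lexLE B A) : A = B := by
  unfold lexLE at h1 h2
  have h3 : (B \ A).min = (A \ B).min := le_antisymm h1 h2
  by_contra hne
  have hone : A \ B ≠ ∅ ∨ B \ A ≠ ∅ := by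
    by_contra hc
    push_neg at hc
    exact hne (subset_antisymm (Finset.sdiff_eq_empty_iff_subset.mp hc.1)
      (Finset.sdiff_eq_empty_iff_subset.mp hc.2))
  have hnetop : (A \ B).min ≠ ⊤ := by
    rcases hone with h | h
    · rwa [Ne, Finset.min_eq_top]
    · rw [← h3, Ne, Finset.min_eq_top]; exact h
  obtain ⟨a, ha⟩ := WithTop.ne_top_iff_exists.mp hnetop
  have haA := Finset.mem_of_min ha.symm
  have haB := Finset.mem_of_min (h3.trans ha.symm)
  simp only [Finset.mem_sdiff] at haA haB
  exact haA.2 haB.1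

/-! ### Chains -/

theorem strictMono_snoc {α : Type*} [Preorder α] {n : ℕ} {f : Fin (n + 1) → α}
    (hf : StrictMono f) {x : α} (hx : f (Fin.last n) < x) :
    StrictMono (Fin.snoc f x : Fin (n + 2) → α) := by
  intro i j hij
  rcases Fin.eq_castSucc_or_eq_last j with ⟨j', rfl⟩ | rfl
  · rcases Fin.eq_castSucc_or_eq_last i with ⟨i', rfl⟩ | rfl
    · rw [Fin.snoc_castSucc, Fin.snoc_castSucc]
      exact hf (Fin.castSucc_lt_castSucc_iff.mp hij)
    · exact absurd hij (not_lt_of_gt (Fin.castSucc_lt_last j'))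
  · rcases Fin.eq_castSucc_or_eq_last i with ⟨i', rfl⟩ | rfl
    · rw [Fin.snoc_castSucc, Fin.snoc_last]
      exact lt_of_le_of_lt (hf.monotone (Fin.le_last i')) hx
    · exact absurd hij (lt_irrefl _)

/-- A three element chain. -/
def c3 {α : Type*} (x y z : α) : Fin 3 → α :=
  fun i => if i.val = 0 then x else if i.val = 1 then y else z

theorem c3_strictMono {α : Type*} [Preorder α] {x y z : α} (h1 : x < y) (h2 : y < z) :
    StrictMono (c3 x y z) := by
  intro i j hij
  rcases i with ⟨iv, hi⟩
  rcases j with ⟨jv, hj⟩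
  simp only [Fin.mk_lt_mk] at hij
  unfold c3
  interval_cases iv <;> interval_cases jv <;> simp_all <;>
    first
      | exact h1
      | exact h2
      | exact h1.trans h2

theorem c3_last {α : Type*} (x y z : α) : c3 x y z (Fin.last 2) = z := rfl

/-- A two element chain. -/
def c2 {α : Type*} (x y : α) : Fin 2 → α :=
  fun i => if i.val = 0 then x else y

theorem c2_strictMono {α : Type*} [Preorder α] {x y : α} (h1 : x < y) :
    StrictMono (c2 x y) := by
  intro i j hij
  rcases i with ⟨iv, hi⟩
  rcases j with ⟨jv, hj⟩
  simp only [Fin.mk_lt_mk] at hij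
  unfold c2
  interval_cases iv <;> interval_cases jv <;> simp_all

theorem c2_last {α : Type*} (x y : α) : c2 x y (Fin.last 1) = y := rfl

/-! ### Basic facts about `ObjLength` -/

theorem objLength_unique {Z : C} {m n : ℕ} (h1 : ObjLength Z m) (h2 : ObjLength Z n) : m = n := by
  obtain ⟨⟨f, hf, -, -⟩, hb1⟩ := h1
  obtain ⟨⟨g, hg, -, -⟩, hb2⟩ := h2
  exact le_antisymm (hb2 m f hf) (hb1 n g hg)

theorem objLength_congr {Y Z : C} (e : Subobject Y ≃o Subobject Z) {n : ℕ}
    (h : ObjLength Y n) : ObjLength Z n := by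
  obtain ⟨⟨f, hf, h0, hl⟩, hb⟩ := h
  refine ⟨⟨fun i => e (f i), fun i j hij => e.strictMono (hf hij),
    by show e (f 0) = ⊥; rw [h0]; exact e.map_bot,
    by show e (f (Fin.last n)) = ⊤; rw [hl]; exact e.map_top⟩,
    fun m g hg => hb m (fun i => e.symm (g i)) (fun i j hij => e.symm.strictMono (hg hij))⟩

theorem len_eq_of_iso (len : C → ℕ) (hlen : ∀ Z : C, ObjLength Z (len Z)) {Y Z : C}
    (e : Y ≅ Z) : len Y = len Z :=
  objLength_unique (objLength_congr (mapIsoToOrderIso e) (hlen Y)) (hlen Z)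

/-- The bridge between the length of the object underlying a subobject and chains in
the ambient subobject lattice. -/
theorem len_spec (len : C → ℕ) (hlen : ∀ Z : C, ObjLength Z (len Z)) {X : C}
    (t : Subobject X) :
    (∃ f : Fin (len ((t : Subobject X) : C) + 1) → Subobject X,
      StrictMono f ∧ f 0 = ⊥ ∧ f (Fin.last _) = t) ∧
    ∀ (m : ℕ) (f : Fin (m + 1) → Subobject X), StrictMono f → f (Fin.last m) ≤ t →
      m ≤ len ((t : Subobject X) : C) := by
  set e := subobjectOrderIso t with he
  constructor
  · obtain ⟨⟨f, hf, h0, hl⟩, -⟩ := hlen ((t : Subobject X) : C)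
    refine ⟨fun i => ((e (f i) : Set.Iic t) : Subobject X), fun i j hij => ?_, ?_, ?_⟩
    · exact Subtype.coe_lt_coe.mpr (e.strictMono (hf hij))
    · show ((e (f 0) : Set.Iic t) : Subobject X) = ⊥
      rw [h0, e.map_bot]; rfl
    · show ((e (f (Fin.last _)) : Set.Iic t) : Subobject X) = t
      rw [hl, e.map_top]; rfl
  · intro m f hf hle
    have hi : ∀ i, f i ≤ t := fun i => le_trans (hf.monotone (Fin.le_last i)) hle
    exact (hlen _).2 m (fun i => e.symm ⟨f i, hi i⟩)
      (fun i j hij => e.symm.strictMono (Subtype.mk_lt_mk.mpr (hf hij)))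

theorem len_coe_eq_zero_iff (len : C → ℕ) (hlen : ∀ Z : C, ObjLength Z (len Z)) {X : C} (t : Subobject X) :
    len ((t : Subobject X) : C) = 0 ↔ t = ⊥ := by
  constructor
  · intro h
    by_contra hne
    have h1 : StrictMono (c2 (⊥ : Subobject X) t) := c2_strictMono (bot_lt_iff_ne_bot.mpr hne)
    have := (len_spec len hlen t).2 1 _ h1 (by rw [c2_last])
    omega
  · rintro rfl
    obtain ⟨f, hf, h0, hl⟩ := (len_spec len hlen (⊥ : Subobject X)).1
    by_contra hne
    have hlt : (0 : Fin _) < Fin.last (len (((⊥ : Subobject X) : C))) := by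
      rw [Fin.lt_def]
      simpa using Nat.pos_of_ne_zero hne
    have := hf hlt
    rw [h0, hl] at this
    exact lt_irrefl _ this

theorem len_lt_of_lt (len : C → ℕ) (hlen : ∀ Z : C, ObjLength Z (len Z)) {X : C} {s t : Subobject X} (h : s < t) :
    len ((s : Subobject X) : C) < len ((t : Subobject X) : C) := by
  obtain ⟨f, hf, h0, hl⟩ := (len_spec len hlen s).1
  have hsnoc : StrictMono (Fin.snoc f t) := strictMono_snoc hf (by rw [hl]; exact h)
  have := (len_spec len hlen t).2 (len ((s : Subobject X) : C) + 1) (Fin.snoc f t) hsnoc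
    (by rw [Fin.snoc_last])
  omega

theorem len_le_of_le (len : C → ℕ) (hlen : ∀ Z : C, ObjLength Z (len Z)) {X : C} {s t : Subobject X} (h : s ≤ t) :
    len ((s : Subobject X) : C) ≤ len ((t : Subobject X) : C) := by
  rcases lt_or_eq_of_le h with h | rfl
  · exact (len_lt_of_lt len hlen h).le
  · exact le_rfl

theorem len_coe_top (len : C → ℕ) (hlen : ∀ Z : C, ObjLength Z (len Z)) {X : C} : len (((⊤ : Subobject X) : C)) = len X :=
  len_eq_of_iso len hlen (asIso (⊤ : Subobject X).arrow)

theorem isAtom_iff_len_one (len : C → ℕ) (hlen : ∀ Z : C, ObjLength Z (len Z)) {X : C} (t : Subobject X) :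
    IsAtom t ↔ len ((t : Subobject X) : C) = 1 := by
  constructor
  · intro ha
    have h1 : 1 ≤ len ((t : Subobject X) : C) := by
      rw [Nat.one_le_iff_ne_zero, Ne, len_coe_eq_zero_iff len hlen]
      exact ha.1
    by_contra hne
    have h2 : 2 ≤ len ((t : Subobject X) : C) := by omega
    obtain ⟨f, hf, h0, hl⟩ := (len_spec len hlen t).1
    have hlt1 : (0 : Fin _) < (⟨1, by omega⟩ : Fin (len ((t : Subobject X) : C) + 1)) := by
      rw [Fin.lt_def]; simp
    have hlt2 : (⟨1, by omega⟩ : Fin (len ((t : Subobject X) : C) + 1)) < Fin.last _ := by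
      rw [Fin.lt_def]; simpa using by omega
    have hb : f ⟨1, by omega⟩ = ⊥ := ha.2 _ (by have := hf hlt2; rwa [hl] at this)
    have := hf hlt1
    rw [h0, hb] at this
    exact lt_irrefl _ this
  · intro h1
    constructor
    · rw [Ne, ← len_coe_eq_zero_iff len hlen]; omega
    · intro b hb
      by_contra hne
      have hbb : (⊥ : Subobject X) < b := bot_lt_iff_ne_bot.mpr hne
      have hmono : StrictMono (c3 (⊥ : Subobject X) b t) := c3_strictMono hbb hb
      have := (len_spec len hlen t).2 2 _ hmono (by rw [c3_last])
      omega

theorem exists_atom_le (len : C → ℕ) (hlen : ∀ Z : C, ObjLength Z (len Z)) {X : C} :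
    ∀ (n : ℕ) (t : Subobject X), len ((t : Subobject X) : C) ≤ n → t ≠ ⊥ →
      ∃ a, IsAtom a ∧ a ≤ t := by
  intro n
  induction n with
  | zero =>
    intro t h hne
    exact absurd ((len_coe_eq_zero_iff len hlen t).mp (Nat.le_zero.mp h)) hne
  | succ n ih =>
    intro t hle hne
    by_cases ha : IsAtom t
    · exact ⟨t, ha, le_rfl⟩
    · have h1 : 1 ≤ len ((t : Subobject X) : C) :=
        Nat.one_le_iff_ne_zero.mpr (fun h => hne ((len_coe_eq_zero_iff len hlen t).mp h))
      have h2 : len ((t : Subobject X) : C) ≠ 1 :=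
        fun h => ha ((isAtom_iff_len_one len hlen t).mpr h)
      obtain ⟨f, hf, h0, hl⟩ := (len_spec len hlen t).1
      have hu0 : (⊥ : Subobject X) < f ⟨1, by omega⟩ := by
        have := hf (show (0 : Fin _) < ⟨1, by omega⟩ by rw [Fin.lt_def]; simp)
        rwa [h0] at this
      have hut : f ⟨1, by omega⟩ < t := by
        have := hf (show (⟨1, by omega⟩ : Fin _) < Fin.last _ by
          rw [Fin.lt_def]; simpa using by omega)
        rwa [hl] at this
      have hlen1 := len_lt_of_lt len hlen hut
      obtain ⟨a, haa, hau⟩ := ih (f ⟨1, by omega⟩) (by omega) hu0.ne'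
      exact ⟨a, haa, hau.trans hut.le⟩

theorem isZero_coe_iff {X : C} (t : Subobject X) :
    IsZero ((t : Subobject X) : C) ↔ t = ⊥ := by
  constructor
  · intro h
    have h0 : t.arrow = 0 := h.eq_of_src _ _
    rw [← mk_arrow t, mk_eq_bot_iff_zero]
    exact h0
  · rintro rfl
    exact (isZero_zero C).of_iso botCoeIsoZero

theorem indecomposable_of_iso {Y Z : C} (e : Y ≅ Z) (h : Indecomposable Y) :
    Indecomposable Z :=
  ⟨fun hz => h.1 (hz.of_iso e), fun A B i => h.2 A B (e.trans i)⟩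

theorem eq_bot_of_arrow_eq_zero {X : C} (w : Subobject X) (h : w.arrow = 0) : w = ⊥ := by
  rw [← mk_arrow w, mk_eq_bot_iff_zero]
  exact h

/-- Complementary subobjects give a biproduct decomposition. -/
theorem iso_biprod_of_compl {W : C} (a b : Subobject W) (hinf : a ⊓ b = ⊥)
    (hsup : a ⊔ b = ⊤) :
    Nonempty (W ≅ ((a : Subobject W) : C) ⊞ ((b : Subobject W) : C)) := by
  let φ : ((a : Subobject W) : C) ⊞ ((b : Subobject W) : C) ⟶ W := biprod.desc a.arrow b.arrow
  have hφeq : φ = biprod.fst ≫ a.arrow + biprod.snd ≫ b.arrow := by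
    apply biprod.hom_ext' <;> simp [φ]
  have hmono : Mono φ := by
    apply Preadditive.mono_of_cancel_zero
    intro K g hg
    have key : (g ≫ biprod.fst) ≫ a.arrow + (g ≫ biprod.snd) ≫ b.arrow = 0 := by
      rw [Category.assoc, Category.assoc, ← Preadditive.comp_add, ← hφeq]
      exact hg
    have hfa : a.Factors ((g ≫ biprod.fst) ≫ a.arrow) := factors_comp_arrow _
    have hfb : b.Factors ((g ≫ biprod.fst) ≫ a.arrow) := by
      have heq : (g ≫ biprod.fst) ≫ a.arrow = (-(g ≫ biprod.snd)) ≫ b.arrow := by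
        rw [Preadditive.neg_comp]
        exact eq_neg_of_add_eq_zero_left key
      rw [heq]
      exact factors_comp_arrow _
    have h0 : (g ≫ biprod.fst) ≫ a.arrow = 0 := by
      have hib := (inf_factors _).mpr ⟨hfa, hfb⟩
      rwa [hinf, bot_factors_iff_zero] at hib
    have h1 : g ≫ biprod.fst = 0 := zero_of_comp_mono a.arrow h0
    have h2 : g ≫ biprod.snd = 0 := by
      apply zero_of_comp_mono b.arrow
      rw [h1, zero_comp, zero_add] at key
      exact key
    apply biprod.hom_ext <;> simpa
  have hepi : Epi φ := by
    have ha : a ≤ imageSubobject φ := by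
      have h1 : biprod.inl ≫ φ = a.arrow := biprod.inl_desc _ _
      have h2 : imageSubobject (biprod.inl ≫ φ) ≤ imageSubobject φ := imageSubobject_comp_le _ _
      rwa [h1, imageSubobject_mono, mk_arrow] at h2
    have hb : b ≤ imageSubobject φ := by
      have h1 : biprod.inr ≫ φ = b.arrow := biprod.inr_desc _ _
      have h2 : imageSubobject (biprod.inr ≫ φ) ≤ imageSubobject φ := imageSubobject_comp_le _ _
      rwa [h1, imageSubobject_mono, mk_arrow] at h2
    have htop : imageSubobject φ = ⊤ := top_le_iff.mp (by rw [← hsup]; exact sup_le ha hb)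
    haveI : IsIso (imageSubobject φ).arrow := by rw [isIso_arrow_iff_eq_top]; exact htop
    rw [← imageSubobject_arrow_comp φ]
    exact epi_comp _ _
  haveI := isIso_of_mono_of_epi φ
  exact ⟨(asIso φ).symm⟩

/-- A subobject with a pair of complementary nonzero subobjects is decomposable. -/
theorem not_indecomposable_of_compl_rel {X : C} (u s t : Subobject X) (hs : s ≤ u)
    (ht : t ≤ u) (hinf : s ⊓ t = ⊥) (hsup : s ⊔ t = u) (hsne : s ≠ ⊥) (htne : t ≠ ⊥) :
    ¬ Indecomposable ((u : Subobject X) : C) := by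
  intro hind
  set e := subobjectOrderIso u with he
  set s' := e.symm ⟨s, hs⟩ with hs'
  set t' := e.symm ⟨t, ht⟩ with ht'
  have h1 : s' ⊓ t' = ⊥ := by
    rw [hs', ht', ← e.symm.map_inf]
    have : ((⟨s, hs⟩ : Set.Iic u) ⊓ ⟨t, ht⟩) = ⊥ := by
      apply Subtype.ext
      rw [Set.Iic.coe_inf]
      exact hinf
    rw [this, e.symm.map_bot]
  have h2 : s' ⊔ t' = ⊤ := by
    rw [hs', ht', ← e.symm.map_sup]
    have : ((⟨s, hs⟩ : Set.Iic u) ⊔ ⟨t, ht⟩) = ⊤ := by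
      apply Subtype.ext
      rw [Set.Iic.coe_sup]
      exact hsup
    rw [this, e.symm.map_top]
  obtain ⟨i⟩ := iso_biprod_of_compl s' t' h1 h2
  rcases hind.2 _ _ i with h | h
  · apply hsne
    have hb : s' = ⊥ := (isZero_coe_iff s').mp h
    have : (⟨s, hs⟩ : Set.Iic u) = ⊥ := by
      apply e.symm.injective
      rw [e.symm.map_bot]
      exact hb
    exact congrArg Subtype.val this
  · apply htne
    have hb : t' = ⊥ := (isZero_coe_iff t').mp h
    have : (⟨t, ht⟩ : Set.Iic u) = ⊥ := by
      apply e.symm.injective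
      rw [e.symm.map_bot]
      exact hb
    exact congrArg Subtype.val this

/-- Basic structure of any Gabriel-Roiter chain value for `X` of length 3. -/
theorem chainVal_facts (len : C → ℕ) (hlen : ∀ Z : C, ObjLength Z (len Z)) {X : C} (h3 : len X = 3) {A : Finset ℕ} (h : IsGRChainVal len X A) :
    A ⊆ {1, 2, 3} ∧ 3 ∈ A ∧
      ∀ n ∈ A, ∃ t : Subobject X, Indecomposable ((t : Subobject X) : C) ∧
        len ((t : Subobject X) : C) = n := by
  obtain ⟨s, hc, htop, hind, himg⟩ := h
  have hlen3 : len (((⊤ : Subobject X) : C)) = 3 := by rw [len_coe_top len hlen]; exact h3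
  have hbounds : ∀ t ∈ s, 1 ≤ len ((t : Subobject X) : C) ∧ len ((t : Subobject X) : C) ≤ 3 := by
    intro t ht
    constructor
    · rw [Nat.one_le_iff_ne_zero, Ne, len_coe_eq_zero_iff len hlen]
      intro hbot
      exact (hind t ht).1 ((isZero_coe_iff t).mpr hbot)
    · calc len ((t : Subobject X) : C) ≤ len (((⊤ : Subobject X) : C)) :=
          len_le_of_le len hlen le_top
        _ = 3 := hlen3
  refine ⟨?_, ?_, ?_⟩
  · intro n hn
    rw [← himg] at hn
    obtain ⟨t, ht, rfl⟩ := Finset.mem_image.mp hn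
    have := hbounds t ht
    simp only [Finset.mem_insert, Finset.mem_singleton]
    omega
  · rw [← himg]
    exact Finset.mem_image.mpr ⟨⊤, htop, hlen3⟩
  · intro n hn
    rw [← himg] at hn
    obtain ⟨t, ht, rfl⟩ := Finset.mem_image.mp hn
    exact ⟨t, hind t ht, rfl⟩

/-- A nonzero decomposable object has two disjoint nonzero subobjects. -/
theorem exists_disjoint_of_not_indecomposable {B : C} (hnz : ¬ IsZero B)
    (hnd : ¬ Indecomposable B) :
    ∃ u v : Subobject B, u ≠ ⊥ ∧ v ≠ ⊥ ∧ u ⊓ v = ⊥ := by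
  have hex : ∃ Y Z, ∃ _ : B ≅ Y ⊞ Z, ¬IsZero Y ∧ ¬IsZero Z := by
    by_contra hno
    push_neg at hno
    exact hnd ⟨hnz, fun Y Z i => or_iff_not_imp_left.mpr (hno Y Z i)⟩
  obtain ⟨Y, Z, i, hY, hZ⟩ := hex
  haveI : Mono (biprod.inl ≫ i.inv) := mono_comp _ _
  haveI : Mono (biprod.inr ≫ i.inv) := mono_comp _ _
  refine ⟨Subobject.mk (biprod.inl ≫ i.inv), Subobject.mk (biprod.inr ≫ i.inv), ?_, ?_, ?_⟩
  · intro h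
    apply hY
    rw [IsZero.iff_isSplitMono_eq_zero (biprod.inl : Y ⟶ Y ⊞ Z)]
    have h0 := Subobject.mk_eq_bot_iff_zero.mp h
    rw [← cancel_mono i.inv, zero_comp]
    exact h0
  · intro h
    apply hZ
    rw [IsZero.iff_isSplitMono_eq_zero (biprod.inr : Z ⟶ Y ⊞ Z)]
    have h0 := Subobject.mk_eq_bot_iff_zero.mp h
    rw [← cancel_mono i.inv, zero_comp]
    exact h0
  · apply eq_bot_of_arrow_eq_zero
    set w := Subobject.mk (biprod.inl ≫ i.inv) ⊓ Subobject.mk (biprod.inr ≫ i.inv) with hw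
    have hle1 : w ≤ Subobject.mk (biprod.inl ≫ i.inv) := inf_le_left
    have hle2 : w ≤ Subobject.mk (biprod.inr ≫ i.inv) := inf_le_right
    have e1 := Subobject.ofLEMk_comp hle1
    have e2 := Subobject.ofLEMk_comp hle2
    have h12 : Subobject.ofLEMk w (biprod.inl ≫ i.inv) hle1 ≫ (biprod.inl ≫ i.inv) =
        Subobject.ofLEMk w (biprod.inr ≫ i.inv) hle2 ≫ (biprod.inr ≫ i.inv) :=
      e1.trans e2.symm
    have h12' : Subobject.ofLEMk w (biprod.inl ≫ i.inv) hle1 ≫ biprod.inl =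
        Subobject.ofLEMk w (biprod.inr ≫ i.inv) hle2 ≫ biprod.inr := by
      rw [← cancel_mono i.inv]
      simpa only [Category.assoc] using h12
    have hg2 : Subobject.ofLEMk w (biprod.inr ≫ i.inv) hle2 = 0 := by
      have hs : (Subobject.ofLEMk w (biprod.inl ≫ i.inv) hle1 ≫ biprod.inl) ≫
            (biprod.snd : Y ⊞ Z ⟶ Z) =
          (Subobject.ofLEMk w (biprod.inr ≫ i.inv) hle2 ≫ biprod.inr) ≫
            (biprod.snd : Y ⊞ Z ⟶ Z) := by
        rw [h12']
      simpa using hs.symm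
    rw [← e2, hg2, zero_comp]

end Aux

/-- For an indecomposable object `X` of length `3` in an abelian length
category, `ℓ*(X) = {1,2,3}` if the socle of `X` is simple (i.e. `X` has a
unique simple subobject), and `ℓ*(X) = {1,3}` if the socle has length at
least `2` (i.e. `X` has two distinct simple subobjects). -/
theorem grMeasure_of_length_three
    (len : C → ℕ) (hlen : ∀ Z : C, ObjLength Z (len Z))
    (mu : C → Finset ℕ) (hmu : IsGRMeasure len mu)
    (X : C) (hX : Indecomposable X) (h3 : len X = 3) :
    ((∀ s t : Subobject X, Simple ((s : Subobject X) : C) →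
        Simple ((t : Subobject X) : C) → s = t) →
      mu X = {1, 2, 3}) ∧
    ((∃ s t : Subobject X, Simple ((s : Subobject X) : C) ∧
        Simple ((t : Subobject X) : C) ∧ s ≠ t) →
      mu X = {1, 3}) := by
  classical
  obtain ⟨hmuval, hmumax⟩ := hmu X hX
  have hfacts := chainVal_facts len hlen h3 hmuval
  obtain ⟨⟨f, hf, hf0, hfl⟩, -⟩ := hlen X
  have hba : (⊥ : Subobject X) < f ⟨1, by omega⟩ := by
    have := hf (show (0 : Fin _) < ⟨1, by omega⟩ by rw [Fin.lt_def]; simp)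
    rwa [hf0] at this
  have hab : f ⟨1, by omega⟩ < f ⟨2, by omega⟩ := hf (by rw [Fin.lt_def]; norm_num)
  have hbt : f ⟨2, by omega⟩ < ⊤ := by
    have := hf (show (⟨2, by omega⟩ : Fin _) < Fin.last _ by rw [Fin.lt_def]; simpa using by omega)
    rwa [hfl] at this
  set a := f ⟨1, by omega⟩ with hadef
  set b := f ⟨2, by omega⟩ with hbdef
  have hltop : len (((⊤ : Subobject X) : C)) = 3 := by rw [len_coe_top len hlen]; exact h3
  have hlbot : len (((⊥ : Subobject X) : C)) = 0 := (len_coe_eq_zero_iff len hlen _).mpr rfl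
  have hlab := len_lt_of_lt len hlen hab
  have hlbt := len_lt_of_lt len hlen hbt
  have hlba := len_lt_of_lt len hlen hba
  rw [hltop] at hlbt
  rw [hlbot] at hlba
  have hlena : len ((a : Subobject X) : C) = 1 := by omega
  have hlenb : len ((b : Subobject X) : C) = 2 := by omega
  have hatom_a : IsAtom a := (isAtom_iff_len_one len hlen a).mpr hlena
  haveI hsimple_a : Simple ((a : Subobject X) : C) :=
    (subobject_simple_iff_isAtom a).mpr hatom_a
  have hind_top : Indecomposable (((⊤ : Subobject X) : C)) :=
    indecomposable_of_iso (asIso (⊤ : Subobject X).arrow).symm hX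
  have heq_top_of_len3 : ∀ u : Subobject X, len ((u : Subobject X) : C) = 3 → u = ⊤ := by
    intro u hu
    by_contra hne
    have := len_lt_of_lt len hlen (lt_top_iff_ne_top.mpr hne)
    rw [hu, hltop] at this
    exact lt_irrefl _ this
  have hle3 : ∀ u : Subobject X, len ((u : Subobject X) : C) ≤ 3 := by
    intro u
    have := len_le_of_le len hlen (le_top (a := u))
    rwa [hltop] at this
  constructor
  · -- socle simple
    intro hsoc
    have hbz : ¬ IsZero ((b : Subobject X) : C) := by
      rw [isZero_coe_iff]
      intro hb
      rw [hb, hlbot] at hlenb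
      omega
    have hbind : Indecomposable ((b : Subobject X) : C) := by
      by_contra hbnd
      obtain ⟨u0, v0, hu0, hv0, huv⟩ := exists_disjoint_of_not_indecomposable hbz hbnd
      set E := Subobject.subobjectOrderIso b with hE
      set U : Subobject X := ((E u0 : Set.Iic b) : Subobject X) with hU
      set V : Subobject X := ((E v0 : Set.Iic b) : Subobject X) with hV
      have hUV : U ⊓ V = ⊥ := by
        have h1 : E (u0 ⊓ v0) = E u0 ⊓ E v0 := E.map_inf u0 v0
        rw [huv, E.map_bot] at h1
        have h2 := congrArg Subtype.val h1.symm
        rw [Set.Iic.coe_inf] at h2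
        exact h2
      have hUne : U ≠ ⊥ := by
        intro h
        apply hu0
        apply E.injective
        rw [E.map_bot]
        exact Subtype.ext h
      have hVne : V ≠ ⊥ := by
        intro h
        apply hv0
        apply E.injective
        rw [E.map_bot]
        exact Subtype.ext h
      obtain ⟨a1, ha1, ha1U⟩ :=
        exists_atom_le len hlen (len ((U : Subobject X) : C)) U le_rfl hUne
      obtain ⟨a2, ha2, ha2V⟩ :=
        exists_atom_le len hlen (len ((V : Subobject X) : C)) V le_rfl hVne
      have h12 : a1 = a2 := hsoc a1 a2 ((subobject_simple_iff_isAtom a1).mpr ha1)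
        ((subobject_simple_iff_isAtom a2).mpr ha2)
      apply ha1.1
      rw [← le_bot_iff, ← hUV]
      exact le_inf ha1U (h12 ▸ ha2V)
    have val123 : IsGRChainVal len X {1, 2, 3} := by
      refine ⟨{a, b, ⊤}, ?_, by simp, ?_, ?_⟩
      · intro x hx y hy hne
        simp only [Finset.coe_insert, Set.mem_insert_iff, Finset.coe_singleton,
          Set.mem_singleton_iff] at hx hy
        rcases hx with rfl | rfl | rfl <;> rcases hy with rfl | rfl | rfl <;>
          simp [hab.le, le_top, hab.le.trans le_top]
      · intro t ht
        simp only [Finset.mem_insert, Finset.mem_singleton] at ht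
        rcases ht with rfl | rfl | rfl
        · exact indecomposable_of_simple _
        · exact hbind
        · exact hind_top
      · simp only [Finset.image_insert, Finset.image_singleton]
        rw [hlena, hlenb, hltop]
    exact lexLE_antisymm (lexLE_of_subset hfacts.1) (hmumax _ val123)
  · -- socle of length at least two
    rintro ⟨s, t, hs, ht, hst⟩
    have hsa : IsAtom s := (subobject_simple_iff_isAtom s).mp hs
    have hta : IsAtom t := (subobject_simple_iff_isAtom t).mp ht
    have hdisj : s ⊓ t = ⊥ := by
      rcases hsa.le_iff.mp inf_le_left with h | h
      · exact h
      · have hsle : s ≤ t := by rw [← h]; exact inf_le_right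
        rcases hta.le_iff.mp hsle with h' | h'
        · exact absurd h' hsa.1
        · exact absurd h' hst
    have hno2 : ∀ u : Subobject X, Indecomposable ((u : Subobject X) : C) →
        len ((u : Subobject X) : C) ≠ 2 := by
      intro u hu h2
      by_cases hcase : s ≤ u ∧ t ≤ u
      · obtain ⟨hsu, htu⟩ := hcase
        have hslt : s < s ⊔ t := lt_of_le_of_ne le_sup_left (by
          intro h
          have hts : t ≤ s := le_sup_right.trans h.ge
          rcases hsa.le_iff.mp hts with h' | h'
          · exact hta.1 h'
          · exact hst h'.symm)
        have hls : len ((s : Subobject X) : C) = 1 := (isAtom_iff_len_one len hlen s).mp hsa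
        have hlsup := len_lt_of_lt len hlen hslt
        have hsup_le : s ⊔ t ≤ u := sup_le hsu htu
        have hequ : s ⊔ t = u := by
          rcases lt_or_eq_of_le hsup_le with hlt | he
          · have := len_lt_of_lt len hlen hlt
            omega
          · exact he
        exact not_indecomposable_of_compl_rel u s t hsu htu hdisj hequ hsa.1 hta.1 hu
      · obtain ⟨w, hw, hwu⟩ : ∃ w : Subobject X, IsAtom w ∧ ¬ w ≤ u := by
          rcases not_and_or.mp hcase with h | h
          exacts [⟨s, hsa, h⟩, ⟨t, hta, h⟩]
        have hinfw : u ⊓ w = ⊥ := by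
          rcases hw.le_iff.mp inf_le_right with h | h
          · exact h
          · refine absurd ?_ hwu
            rw [← h]
            exact inf_le_left
        have hlt : u < u ⊔ w := lt_of_le_of_ne le_sup_left (by
          intro h
          exact hwu (le_sup_right.trans h.ge))
        have hsupw : u ⊔ w = ⊤ := by
          apply heq_top_of_len3
          have h1 := len_lt_of_lt len hlen hlt
          have h2' := hle3 (u ⊔ w)
          omega
        obtain ⟨i⟩ := iso_biprod_of_compl u w hinfw hsupw
        rcases hX.2 _ _ i with h | h
        · rw [isZero_coe_iff] at h
          rw [h, hlbot] at h2
          omega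
        · rw [isZero_coe_iff] at h
          exact hw.1 h
    have hls1 : len ((s : Subobject X) : C) = 1 := (isAtom_iff_len_one len hlen s).mp hsa
    have val13 : IsGRChainVal len X {1, 3} := by
      refine ⟨{s, ⊤}, ?_, by simp, ?_, ?_⟩
      · intro x hx y hy hne
        simp only [Finset.coe_insert, Set.mem_insert_iff, Finset.coe_singleton,
          Set.mem_singleton_iff] at hx hy
        rcases hx with rfl | rfl <;> rcases hy with rfl | rfl <;> simp
      · intro t' ht'
        simp only [Finset.mem_insert, Finset.mem_singleton] at ht'
        rcases ht' with rfl | rfl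
        · exact indecomposable_of_simple _
        · exact hind_top
      · simp only [Finset.image_insert, Finset.image_singleton]
        rw [hls1, hltop]
    have hsub13 : mu X ⊆ {1, 3} := by
      intro n hn
      have hmem := hfacts.1 hn
      obtain ⟨t', hind', hlen'⟩ := hfacts.2.2 n hn
      have hne2 := hno2 t' hind'
      simp only [Finset.mem_insert, Finset.mem_singleton] at hmem ⊢
      omega
    exact lexLE_antisymm (lexLE_of_subset hsub13) (hmumax _ val13)
end

section
/- Let A be an abelian length category and C a full subcategory closed under finite direct sums and under subobjects. Then C is covariantly finite in A: every object X of A admits a map X → Y with Y in C such that every map from X to an object of C factors through it. Moreover, the left approximation can be taken as the quotient X → X/X' where X' is minimal among kernels of maps from X to objects of C. -/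
open CategoryTheory CategoryTheory.Limits

variable {C : Type*} [Category C] [Abelian C]

section Aux

open ZeroObject

variable {C : Type*} [Category C] [Abelian C]

lemma wf_subobject_of_objLength (X : C) (h : ∃ n : ℕ, ObjLength X n) :
    WellFounded ((· < ·) : Subobject X → Subobject X → Prop) := by
  obtain ⟨n, -, hbound⟩ := h
  rw [RelEmbedding.wellFounded_iff_isEmpty]
  constructor
  intro g
  have hg : ∀ a b : ℕ, a > b → g a < g b := fun a b hab => g.map_rel_iff.2 hab
  set f : Fin (n + 1 + 1) → Subobject X := fun i => g (n + 1 - (i : ℕ)) with hf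
  have hmono : StrictMono f := by
    intro i j hij
    apply hg
    have hi : (i : ℕ) < n + 1 + 1 := i.isLt
    have hj : (j : ℕ) < n + 1 + 1 := j.isLt
    have : (i : ℕ) < (j : ℕ) := hij
    omega
  exact absurd (hbound (n + 1) f hmono) (by omega)

lemma mono_cokernel_desc_kernelSubobject {X Z : C} (ψ : X ⟶ Z) :
    Mono (cokernel.desc (kernelSubobject ψ).arrow ψ (by simp)) := by
  let e : cokernel (kernelSubobject ψ).arrow ≅ cokernel (kernel.ι ψ) :=
    cokernelIsoOfEq (kernelSubobject_arrow ψ).symm ≪≫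
      cokernelEpiComp (kernelSubobjectIso ψ).hom (kernel.ι ψ)
  have hfac : cokernel.desc (kernelSubobject ψ).arrow ψ (by simp) =
      e.hom ≫ Abelian.factorThruCoimage ψ := by
    rw [← cancel_epi (cokernel.π (kernelSubobject ψ).arrow)]
    simp only [cokernel.π_desc, e, Iso.trans_hom, ← Category.assoc,
      π_comp_cokernelIsoOfEq_hom]
    simp [Abelian.factorThruCoimage]
  rw [hfac]
  infer_instance

end Aux

open ZeroObject

/-- A subcategory (here given by a predicate `P` on objects) of an abelian
length category which is closed under finite direct sums and under
subobjects is covariantly finite: every object `X` admits a left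
approximation `X ⟶ Y` with `P Y`. Moreover, the left approximation can be
taken to be the quotient `X → X/X'` where `X'` is minimal among the kernels
of maps from `X` to objects satisfying `P`. -/
theorem covariantlyFinite_of_closed_subobjects
    (hlength : ∀ Z : C, ∃ n : ℕ, ObjLength Z n)
    (P : C → Prop)
    (hzero : ∀ O : C, Limits.IsZero O → P O)
    (hsum : ∀ X Y : C, P X → P Y → P (X ⊞ Y))
    (hsub : ∀ (A X : C) (f : A ⟶ X), Mono f → P X → P A) :
    (∀ X : C, ∃ (Y : C) (φ : X ⟶ Y), P Y ∧
      ∀ (Z : C) (ψ : X ⟶ Z), P Z → ∃ ρ : Y ⟶ Z, φ ≫ ρ = ψ) ∧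
    (∀ (X : C) (s : Subobject X),
      (∃ (Z : C) (ψ : X ⟶ Z), P Z ∧ s = kernelSubobject ψ) →
      (∀ t : Subobject X, (∃ (Z : C) (ψ : X ⟶ Z), P Z ∧ t = kernelSubobject ψ) →
        ¬ t < s) →
      (P (cokernel s.arrow) ∧
        ∀ (Z : C) (ψ : X ⟶ Z), P Z →
          ∃ ρ : cokernel s.arrow ⟶ Z, cokernel.π s.arrow ≫ ρ = ψ)) := by
  have main : ∀ (X : C) (s : Subobject X),
      (∃ (Z : C) (ψ : X ⟶ Z), P Z ∧ s = kernelSubobject ψ) →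
      (∀ t : Subobject X, (∃ (Z : C) (ψ : X ⟶ Z), P Z ∧ t = kernelSubobject ψ) → ¬ t < s) →
      P (cokernel s.arrow) ∧ ∀ (Z : C) (ψ : X ⟶ Z), P Z →
        ∃ ρ : cokernel s.arrow ⟶ Z, cokernel.π s.arrow ≫ ρ = ψ := by
    intro X s hmem hmin
    obtain ⟨Z₀, ψ₀, hPZ₀, hs⟩ := hmem
    subst hs
    have key : ∀ (Z : C) (ψ : X ⟶ Z), P Z → kernelSubobject ψ₀ ≤ kernelSubobject ψ := by
      intro Z ψ hPZ
      have h1 : kernelSubobject (biprod.lift ψ₀ ψ) ≤ kernelSubobject ψ₀ := by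
        simpa using kernelSubobject_comp_le (biprod.lift ψ₀ ψ) biprod.fst
      have heq : kernelSubobject (biprod.lift ψ₀ ψ) = kernelSubobject ψ₀ :=
        h1.lt_or_eq.resolve_left (hmin _ ⟨Z₀ ⊞ Z, biprod.lift ψ₀ ψ, hsum _ _ hPZ₀ hPZ, rfl⟩)
      rw [← heq]
      simpa using kernelSubobject_comp_le (biprod.lift ψ₀ ψ) biprod.snd
    have hz : ∀ (Z : C) (ψ : X ⟶ Z), P Z → (kernelSubobject ψ₀).arrow ≫ ψ = 0 := by
      intro Z ψ hPZ
      rw [← Subobject.ofLE_arrow (key Z ψ hPZ), Category.assoc, kernelSubobject_arrow_comp,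
        comp_zero]
    refine ⟨?_, fun Z ψ hPZ => ⟨cokernel.desc _ ψ (hz Z ψ hPZ), cokernel.π_desc _ _ _⟩⟩
    exact hsub _ _ _ (mono_cokernel_desc_kernelSubobject ψ₀) hPZ₀
  refine ⟨?_, fun X s hmem hmin => main X s hmem hmin⟩
  intro X
  have hwf := wf_subobject_of_objLength X (hlength X)
  have hne : Set.Nonempty {t : Subobject X | ∃ (Z : C) (ψ : X ⟶ Z), P Z ∧ t = kernelSubobject ψ} :=
    ⟨kernelSubobject (0 : X ⟶ 0), 0, 0, hzero _ (isZero_zero C), rfl⟩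
  obtain ⟨s, hsmem, hsmin⟩ := hwf.has_min _ hne
  obtain ⟨hP, hfac⟩ := main X s hsmem (fun t ht hlt => hsmin t ht hlt)
  exact ⟨cokernel s.arrow, cokernel.π s.arrow, hP, hfac⟩
end
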